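/- arXiv:2301.10952 — 4 statements merged into one kernel-verified Lean document; each statement's English description precedes it below -/
import Mathlib

section
/- The category of reflexive directed graphs is cartesian closed: for any rgraphs A and B there is an exponential object B^A. -/
/-- A reflexive directed graph. -/
structure RGraph where
  V : Type
  E : Type
  src : E → V
  tgt : E → V
  loop : V → E
  loop_src : ∀ v, src (loop v) = v
  loop_tgt : ∀ v, tgt (loop v) = v

/-- A morphism of reflexive directed graphs. -/
@[ext]
structure RGraphHom (G H : RGraph) where
  onV : G.V → H.V
  onE : G.E → H.E
  map_src : ∀ e, H.src (onE e) = onV (G.src e)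
  map_tgt : ∀ e, H.tgt (onE e) = onV (G.tgt e)
  map_loop : ∀ v, onE (G.loop v) = H.loop (onV v)

/-- The identity rgraph morphism. -/
def RGraphHom.id (G : RGraph) : RGraphHom G G :=
  ⟨fun v => v, fun e => e, fun _ => rfl, fun _ => rfl, fun _ => rfl⟩

/-- Composition of rgraph morphisms (diagrammatic order). -/
def RGraphHom.comp {G H K : RGraph} (f : RGraphHom G H) (g : RGraphHom H K) :
    RGraphHom G K :=
  ⟨fun v => g.onV (f.onV v), fun e => g.onE (f.onE e),
    fun e => by show K.src (g.onE (f.onE e)) = _; rw [g.map_src, f.map_src],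
    fun e => by show K.tgt (g.onE (f.onE e)) = _; rw [g.map_tgt, f.map_tgt],
    fun v => by show g.onE (f.onE (G.loop v)) = _; rw [f.map_loop, g.map_loop]⟩

instance : CategoryTheory.Category RGraph where
  Hom := RGraphHom
  id := RGraphHom.id
  comp := RGraphHom.comp
  id_comp := by intros; rfl
  comp_id := by intros; rfl
  assoc := by intros; rfl
/-- The terminal rgraph: one vertex and only its distinguished loop. -/
def OneR : RGraph :=
  ⟨Unit, Unit, fun _ => (), fun _ => (), fun _ => (), fun _ => rfl, fun _ => rfl⟩

/-- The walking-edge rgraph `E`: vertices `s = false` and `t = true`, their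
distinguished loops (`Sum.inl`), and one extra edge `Sum.inr ()` from `s` to `t`. -/
def WalkingEdge : RGraph :=
  ⟨Bool, Bool ⊕ Unit,
    fun e => match e with | .inl b => b | .inr _ => false,
    fun e => match e with | .inl b => b | .inr _ => true,
    fun b => .inl b, fun _ => rfl, fun _ => rfl⟩

/-- The binary product of two rgraphs, formed componentwise. -/
def RGraph.prod (G H : RGraph) : RGraph :=
  ⟨G.V × H.V, G.E × H.E,
    fun e => (G.src e.1, H.src e.2), fun e => (G.tgt e.1, H.tgt e.2),
    fun v => (G.loop v.1, H.loop v.2),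
    fun v => by simp [G.loop_src, H.loop_src],
    fun v => by simp [G.loop_tgt, H.loop_tgt]⟩

/-- First projection from a product rgraph. -/
def RGraph.fst (G H : RGraph) : RGraphHom (G.prod H) G :=
  ⟨Prod.fst, Prod.fst, fun _ => rfl, fun _ => rfl, fun _ => rfl⟩

/-- Second projection from a product rgraph. -/
def RGraph.snd (G H : RGraph) : RGraphHom (G.prod H) H :=
  ⟨Prod.snd, Prod.snd, fun _ => rfl, fun _ => rfl, fun _ => rfl⟩

/-- Apply a morphism on the left factor of a product rgraph. -/
def RGraphHom.prodMapLeft {C D : RGraph} (h : RGraphHom C D) (A : RGraph) :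
    RGraphHom (C.prod A) (D.prod A) :=
  ⟨fun v => (h.onV v.1, v.2), fun e => (h.onE e.1, e.2),
    fun e => by show (D.src (h.onE e.1), _) = _; rw [h.map_src]; rfl,
    fun e => by show (D.tgt (h.onE e.1), _) = _; rw [h.map_tgt]; rfl,
    fun v => by show (h.onE (C.loop v.1), _) = _; rw [h.map_loop]; rfl⟩

/-!
The vertices of `B^A` are the morphisms `A → B`, its edges the morphisms `E × A → B`, and
evaluation reads an edge of `B^A × A` along the non-loop edge of the walking edge `E`.
A morphism `f : C × A → B` is curried by sending an edge `d` of `C` to `f ∘ (χ_d × A)`, where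
`χ_d : E → C` classifies `d`. Currying is inverse to `h ↦ ev ∘ (h × A)` because every edge `φ`
of `B^A` is recovered as `ev ∘ (χ_φ × A)`, and classifying maps are natural: `χ_{h d} = h ∘ χ_d`.
-/

namespace RGraph

variable {A B C D : RGraph}

def endpoint (d : C.E) : Bool → C.V
  | false => C.src d
  | true => C.tgt d

theorem endpoint_loop (c : C.V) (b : Bool) : endpoint (C.loop c) b = c := by
  cases b
  exacts [C.loop_src c, C.loop_tgt c]

theorem endpoint_map (h : RGraphHom C D) (d : C.E) (b : Bool) :
    endpoint (h.onE d) b = h.onV (endpoint d b) := by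
  cases b
  exacts [h.map_src d, h.map_tgt d]

def edgeHom (d : C.E) : RGraphHom WalkingEdge C where
  onV := endpoint d
  onE
    | .inl b => C.loop (endpoint d b)
    | .inr _ => d
  map_src
    | .inl _ => C.loop_src _
    | .inr _ => rfl
  map_tgt
    | .inl _ => C.loop_tgt _
    | .inr _ => rfl
  map_loop _ := rfl

def _root_.RGraphHom.const (G : RGraph) {H : RGraph} (c : H.V) : RGraphHom G H :=
  ⟨fun _ => c, fun _ => H.loop c, fun _ => H.loop_src c, fun _ => H.loop_tgt c, fun _ => rfl⟩

theorem edgeHom_loop (c : C.V) : edgeHom (C.loop c) = RGraphHom.const WalkingEdge c := by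
  refine RGraphHom.ext (funext (endpoint_loop c)) (funext ?_)
  rintro (b | _)
  · exact congrArg C.loop (endpoint_loop c b)
  · rfl

theorem edgeHom_map (h : RGraphHom C D) (d : C.E) : edgeHom (h.onE d) = (edgeHom d).comp h := by
  refine RGraphHom.ext (funext (endpoint_map h d)) (funext ?_)
  rintro (b | _)
  · show D.loop _ = h.onE (C.loop _)
    rw [h.map_loop, endpoint_map]
  · rfl

variable (A) in
def inclFiber (c : C.V) : RGraphHom A (C.prod A) where
  onV a := (c, a)
  onE e := (C.loop c, e)
  map_src _ := Prod.ext (C.loop_src c) rfl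
  map_tgt _ := Prod.ext (C.loop_tgt c) rfl
  map_loop _ := rfl

theorem inclFiber_comp_prodMapLeft (h : RGraphHom C D) (c : C.V) :
    (inclFiber A c).comp (h.prodMapLeft A) = inclFiber A (h.onV c) :=
  RGraphHom.ext rfl (funext fun _ => Prod.ext (h.map_loop c) rfl)

variable (A B) in
def exp_s9 : RGraph where
  V := RGraphHom A B
  E := RGraphHom (WalkingEdge.prod A) B
  src φ := (inclFiber A false).comp φ
  tgt φ := (inclFiber A true).comp φ
  loop g := (snd WalkingEdge A).comp g
  loop_src _ := rfl
  loop_tgt _ := rfl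

variable (A B) in
def ev : RGraphHom ((exp_s9 A B).prod A) B where
  onV p := p.1.onV p.2
  onE p := p.1.onE (.inr (), p.2)
  map_src p := p.1.map_src (.inr (), p.2)
  map_tgt p := p.1.map_tgt (.inr (), p.2)
  map_loop p := p.1.map_loop p.2

theorem inclFiber_comp_ev (g : (exp_s9 A B).V) : (inclFiber A g).comp (ev A B) = g := rfl

theorem edgeHom_prodMapLeft_comp_ev (φ : (exp_s9 A B).E) :
    ((edgeHom φ).prodMapLeft A).comp (ev A B) = φ := by
  refine RGraphHom.ext (funext ?_) (funext ?_)
  · rintro ⟨_ | _, _⟩ <;> rfl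
  · rintro ⟨(_ | _) | _, _⟩ <;> rfl

def curry (f : RGraphHom (C.prod A) B) : RGraphHom C (exp_s9 A B) where
  onV c := (inclFiber A c).comp f
  onE d := ((edgeHom d).prodMapLeft A).comp f
  map_src _ := rfl
  map_tgt _ := rfl
  map_loop c := by
    show ((edgeHom (C.loop c)).prodMapLeft A).comp f = _
    rw [edgeHom_loop]
    rfl

theorem prodMapLeft_curry_comp_ev (f : RGraphHom (C.prod A) B) :
    ((curry f).prodMapLeft A).comp (ev A B) = f := rfl

theorem curry_prodMapLeft_comp_ev (h : RGraphHom C (exp_s9 A B)) :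
    curry ((h.prodMapLeft A).comp (ev A B)) = h := by
  refine RGraphHom.ext (funext fun c => ?_) (funext fun d => ?_)
  · rw [← inclFiber_comp_ev (h.onV c), ← inclFiber_comp_prodMapLeft]
    rfl
  · rw [← edgeHom_prodMapLeft_comp_ev (h.onE d), edgeHom_map]
    rfl

end RGraph

/-- The category of reflexive directed graphs is cartesian closed: for any
rgraphs `A` and `B` there is an exponential object `B^A`, i.e. an rgraph `Exp`
with an evaluation morphism `Exp × A → B` through which every morphism
`C × A → B` factors uniquely. -/
theorem rgraph_cartesianClosed (A B : RGraph) :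
    ∃ (Exp : RGraph) (ev : RGraphHom (Exp.prod A) B),
      ∀ (C : RGraph) (f : RGraphHom (C.prod A) B),
        ∃! h : RGraphHom C Exp, (h.prodMapLeft A).comp ev = f := by
  refine ⟨RGraph.exp_s9 A B, RGraph.ev A B, fun C f => ⟨RGraph.curry f, ?_, ?_⟩⟩
  · exact RGraph.prodMapLeft_curry_comp_ev f
  · rintro h rfl
    exact (RGraph.curry_prodMapLeft_comp_ev h).symm
end

section
/- Lawvere's fixed point theorem: in a cartesian closed category, if there is a point-surjective morphism q : A → B^A, then every endomorphism f : B → B has a fixed point among global elements. -/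
/-!
Diagonal argument: given `f : B ⟶ B`, choose a point `a` of `A` that codes the map
`x ↦ f (q x x)`; then `q a a = f (q a a)`, so `q a a` is a fixed point of `f`.
Only the evaluation map `A ⊗ A ⟶ B` obtained by uncurrying `q` matters, and for it
cartesian structure suffices.
-/

open CategoryTheory MonoidalCategory CartesianMonoidalCategory MonoidalClosed CartesianClosed

namespace CategoryTheory

variable {C : Type*} [Category C] [CartesianMonoidalCategory C]

def PointSurjective {X Y : C} (q : X ⟶ Y) : Prop :=
  ∀ y : 𝟙_ C ⟶ Y, ∃ x : 𝟙_ C ⟶ X, x ≫ q = y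

def WeaklyPointSurjective {A B : C} (φ : A ⊗ A ⟶ B) : Prop :=
  ∀ g : A ⟶ B, ∃ a : 𝟙_ C ⟶ A, ∀ x : 𝟙_ C ⟶ A, lift x a ≫ φ = x ≫ g

theorem WeaklyPointSurjective.exists_fixedPoint {A B : C} {φ : A ⊗ A ⟶ B}
    (hφ : WeaklyPointSurjective φ) (f : B ⟶ B) : ∃ b : 𝟙_ C ⟶ B, b ≫ f = b := by
  obtain ⟨a, ha⟩ := hφ (lift (𝟙 A) (𝟙 A) ≫ φ ≫ f)
  refine ⟨lift a a ≫ φ, ?_⟩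
  calc (lift a a ≫ φ) ≫ f
      _ = a ≫ lift (𝟙 A) (𝟙 A) ≫ φ ≫ f := by
        rw [comp_lift_assoc, Category.comp_id, Category.assoc]
      _ = lift a a ≫ φ := (ha a).symm

theorem lift_comp_uncurry_of_comp_eq_curry' [MonoidalClosed C] {A B : C} {q : A ⟶ (A ⟹ B)}
    {g : A ⟶ B} {a : 𝟙_ C ⟶ A} (ha : a ≫ q = curry' g) (x : 𝟙_ C ⟶ A) :
    lift x a ≫ uncurry q = x ≫ g := by
  have hlift : lift x a = lift x (𝟙 _) ≫ A ◁ a := by ext <;> simp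
  rw [hlift, Category.assoc, ← uncurry_natural_left, ha, uncurry_eq,
    whiskerLeft_curry'_ihom_ev_app, lift_rightUnitor_hom_assoc]

theorem PointSurjective.weaklyPointSurjective_uncurry [MonoidalClosed C] {A B : C}
    {q : A ⟶ (A ⟹ B)} (hq : PointSurjective q) : WeaklyPointSurjective (uncurry q) := by
  intro g
  obtain ⟨a, ha⟩ := hq (curry' g)
  exact ⟨a, lift_comp_uncurry_of_comp_eq_curry' ha⟩

end CategoryTheory

open CategoryTheory MonoidalCategory CartesianClosed in
/-- Lawvere's fixed point theorem: in a cartesian closed category, if there is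
a point-surjective morphism `q : A → B^A`, then every endomorphism `f : B → B`
has a fixed point among global elements. -/
theorem lawvere_fixed_point {C : Type*} [Category C]
    [CartesianMonoidalCategory C] [MonoidalClosed C] {A B : C} (q : A ⟶ (A ⟹ B))
    (hq : ∀ g : 𝟙_ C ⟶ (A ⟹ B), ∃ a : 𝟙_ C ⟶ A, a ≫ q = g) (f : B ⟶ B) :
    ∃ b : 𝟙_ C ⟶ B, b ≫ f = b :=
  PointSurjective.weaklyPointSurjective_uncurry hq |>.exists_fixedPoint f
end

section
/- Exponential completeness: if G is a complete rgraph, then the exponential G^H in the category of reflexive directed graphs is complete for any rgraph H. -/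
/-- The inclusion of `H` into `E × H` at the vertex `b` of the walking-edge
rgraph. -/
def inclAt (b : Bool) (H : RGraph) : RGraphHom H (WalkingEdge.prod H) :=
  ⟨fun v => (b, v), fun e => (.inl b, e), fun _ => rfl, fun _ => rfl, fun _ => rfl⟩

/-- The exponential rgraph `G^H`: vertices are rgraph morphisms `H → G`, edges
are rgraph morphisms `E × H → G` (where `E` is the walking-edge rgraph), with
source/target given by restricting along the two inclusions `H → E × H` and
distinguished loops given by precomposition with the projection `E × H → H`. -/
def RGraph.exp (H G : RGraph) : RGraph :=
  ⟨RGraphHom H G, RGraphHom (WalkingEdge.prod H) G,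
    fun m => (inclAt false H).comp m,
    fun m => (inclAt true H).comp m,
    fun f => (RGraph.snd WalkingEdge H).comp f,
    fun _ => rfl, fun _ => rfl⟩

/-- An rgraph is complete if for every ordered pair of vertices `(u, v)` there
is exactly one edge with source `u` and target `v`. -/
def RGraph.Complete (G : RGraph) : Prop :=
  ∀ u v : G.V, ∃! e : G.E, G.src e = u ∧ G.tgt e = v

/-! An edge of `G^H` from `u` to `v` is a morphism `E × H → G` that restricts to `u` and `v` on the
two ends of `E`; what remains free is its value on the cross edges `(s → t, e)`, each of which must
be an edge of `G` from `u (src e)` to `v (tgt e)`. Any such family glues to an edge of `G^H`, so in a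
complete `G` there is exactly one choice. -/

namespace RGraphHom

variable {G H : RGraph}

def glue (u v : RGraphHom H G) (c : H.E → G.E)
    (hc_src : ∀ e, G.src (c e) = u.onV (H.src e)) (hc_tgt : ∀ e, G.tgt (c e) = v.onV (H.tgt e)) :
    RGraphHom (WalkingEdge.prod H) G where
  onV
    | (false, x) => u.onV x
    | (true, x) => v.onV x
  onE
    | (.inl false, e) => u.onE e
    | (.inl true, e) => v.onE e
    | (.inr _, e) => c e
  map_src := by
    rintro ⟨(_ | _) | _, e⟩
    exacts [u.map_src e, v.map_src e, hc_src e]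
  map_tgt := by
    rintro ⟨(_ | _) | _, e⟩
    exacts [u.map_tgt e, v.map_tgt e, hc_tgt e]
  map_loop := by
    rintro ⟨_ | _, x⟩
    exacts [u.map_loop x, v.map_loop x]

variable {u v : RGraphHom H G} {c : H.E → G.E}
  {hc_src : ∀ e, G.src (c e) = u.onV (H.src e)} {hc_tgt : ∀ e, G.tgt (c e) = v.onV (H.tgt e)}

@[simp]
theorem exp_src_glue : (RGraph.exp H G).src (glue u v c hc_src hc_tgt) = u := rfl

@[simp]
theorem exp_tgt_glue : (RGraph.exp H G).tgt (glue u v c hc_src hc_tgt) = v := rfl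

end RGraphHom

theorem RGraph.exp_edge_ext {G H : RGraph} {m m' : (RGraph.exp H G).E}
    (h_src : (RGraph.exp H G).src m = (RGraph.exp H G).src m')
    (h_tgt : (RGraph.exp H G).tgt m = (RGraph.exp H G).tgt m')
    (h_cross : ∀ e, m.onE (.inr (), e) = m'.onE (.inr (), e)) : m = m' := by
  refine RGraphHom.ext (funext ?_) (funext ?_)
  · rintro ⟨_ | _, x⟩
    · exact congrArg (·.onV x) h_src
    · exact congrArg (·.onV x) h_tgt
  rintro ⟨(_ | _) | ⟨⟩, e⟩
  · exact congrArg (·.onE e) h_src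
  · exact congrArg (·.onE e) h_tgt
  · exact h_cross e

/-- Exponential completeness: if `G` is a complete rgraph, then the exponential
`G^H` is complete for any rgraph `H`. -/
theorem exp_complete (G H : RGraph) (hG : G.Complete) :
    (RGraph.exp H G).Complete := by
  intro u v
  choose c hc using fun e : H.E => (hG (u.onV (H.src e)) (v.onV (H.tgt e))).exists
  refine ⟨RGraphHom.glue u v c (fun e => (hc e).1) (fun e => (hc e).2),
    ⟨RGraphHom.exp_src_glue, RGraphHom.exp_tgt_glue⟩, ?_⟩
  rintro m ⟨rfl, rfl⟩
  refine RGraph.exp_edge_ext rfl rfl fun e => ?_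
  exact (hG _ _).unique ⟨m.map_src _, m.map_tgt _⟩ (hc e)
end

section
/- If an rgraph U had the property that every rgraph is (isomorphic to) a vertex of U and there is an injection J from the vertices of K_2^U into the vertices of U, then there is a morphism F : U → K_2^U that is onto for global elements, contradicting Lawvere's corollary; hence no such 'unlimited' U exists. -/
/-- The complete rgraph `K₂` on two vertices: there is exactly one edge for
each ordered pair of vertices (the loops being the distinguished ones). -/
def K2 : RGraph :=
  ⟨Bool, Bool × Bool, Prod.fst, Prod.snd, fun v => (v, v),
    fun _ => rfl, fun _ => rfl⟩

/-- A subrgraph of an rgraph `G`: sets of vertices and edges closed under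
sources, targets and distinguished loops. -/
@[ext]
structure SubRGraph (G : RGraph) where
  verts : Set G.V
  edges : Set G.E
  src_mem : ∀ e ∈ edges, G.src e ∈ verts
  tgt_mem : ∀ e ∈ edges, G.tgt e ∈ verts
  loop_mem : ∀ v ∈ verts, G.loop v ∈ edges

/-- A subrgraph is a tournament if between any two distinct vertices there is
exactly one edge (in one direction or the other). -/
def SubRGraph.IsTournament {G : RGraph} (S : SubRGraph G) : Prop :=
  ∀ u v, u ∈ S.verts → v ∈ S.verts → u ≠ v →
    ∃! e, e ∈ S.edges ∧
      ((G.src e = u ∧ G.tgt e = v) ∨ (G.src e = v ∧ G.tgt e = u))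

/-- An isomorphism of rgraphs. -/
structure RGraphIso (G H : RGraph) where
  hom : RGraphHom G H
  inv : RGraphHom H G
  hom_inv : hom.comp inv = RGraphHom.id G
  inv_hom : inv.comp hom = RGraphHom.id H


/-!
The injection `J` has a left inverse `K`. Since `K₂` is complete, so is `K₂^U`, and any vertex map
into a complete rgraph extends (uniquely) to a morphism; extending `K` gives `F : U → K₂^U`,
surjective on vertices and hence point-surjective. Lawvere's diagonal argument refutes this: the
vertex map `x ↦ ¬ F(x)(x)`, extended to a morphism `U → K₂`, is a vertex of `K₂^U` outside the
image of `F`.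
-/

namespace RGraph

variable {G H : RGraph}

noncomputable def Complete.extend (hG : G.Complete) (f : H.V → G.V) : RGraphHom H G where
  onV := f
  onE e := (hG (f (H.src e)) (f (H.tgt e))).exists.choose
  map_src _ := (hG _ _).exists.choose_spec.1
  map_tgt _ := (hG _ _).exists.choose_spec.2
  map_loop v := (hG _ _).unique (hG _ _).exists.choose_spec
    ⟨by rw [G.loop_src, H.loop_src], by rw [G.loop_tgt, H.loop_tgt]⟩

theorem Complete.hom_ext (hG : G.Complete) {f g : RGraphHom H G} (h : f.onV = g.onV) :
    f = g := by
  refine RGraphHom.ext h (funext fun e => (hG _ _).unique ⟨f.map_src e, f.map_tgt e⟩ ?_)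
  rw [g.map_src, g.map_tgt, h]
  exact ⟨rfl, rfl⟩

theorem Complete.exp (hG : G.Complete) (H : RGraph) : (H.exp G).Complete := by
  intro y₀ y₁
  refine ⟨hG.extend fun p => (cond p.1 y₁ y₀).onV p.2, ⟨hG.hom_ext rfl, hG.hom_ext rfl⟩, ?_⟩
  rintro m ⟨rfl, rfl⟩
  refine hG.hom_ext (funext fun ⟨b, x⟩ => ?_)
  cases b <;> rfl

def point (G : RGraph) (v : G.V) : RGraphHom OneR G :=
  ⟨fun _ => v, fun _ => G.loop v, fun _ => G.loop_src v, fun _ => G.loop_tgt v, fun _ => rfl⟩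

end RGraph

theorem K2_complete : K2.Complete :=
  fun u v => ⟨(u, v), ⟨rfl, rfl⟩, fun _ ⟨h₁, h₂⟩ => Prod.ext h₁ h₂⟩

namespace RGraphHom

variable {G H : RGraph}

theorem ext_oneR {a b : RGraphHom OneR G} (h : a.onV () = b.onV ()) : a = b := by
  refine RGraphHom.ext (funext fun _ => h) (funext fun _ => ?_)
  calc a.onE _ = G.loop (a.onV ()) := a.map_loop ()
    _ = G.loop (b.onV ()) := congrArg G.loop h
    _ = b.onE _ := (b.map_loop ()).symm

def PointSurjective (F : RGraphHom G H) : Prop :=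
  ∀ g : RGraphHom OneR H, ∃ a : RGraphHom OneR G, a.comp F = g

theorem pointSurjective_iff (F : RGraphHom G H) :
    F.PointSurjective ↔ Function.Surjective F.onV := by
  refine ⟨fun hF y => ?_, fun hF g => ?_⟩
  · obtain ⟨a, ha⟩ := hF (H.point y)
    exact ⟨a.onV (), congrArg (·.onV ()) ha⟩
  · obtain ⟨x, hx⟩ := hF (g.onV ())
    exact ⟨G.point x, ext_oneR hx⟩

end RGraphHom

theorem not_pointSurjective_to_exp_K2 {U : RGraph} (F : RGraphHom U (U.exp K2)) :
    ¬ F.PointSurjective := by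
  rw [F.pointSurjective_iff]
  intro hF
  obtain ⟨x, hx⟩ := hF (K2_complete.extend fun x => !(F.onV x).onV x)
  exact Bool.self_ne_not _ (congrArg (·.onV x) hx)

theorem no_unlimited_rgraph_general (U : RGraph)
    (J : (RGraph.exp U K2).V → U.V) (hJ : Function.Injective J) :
    (∃ F : RGraphHom U (RGraph.exp U K2),
        ∀ g : RGraphHom OneR (RGraph.exp U K2),
          ∃ a : RGraphHom OneR U, a.comp F = g) ∧ False := by
  have : Nonempty (U.exp K2).V := ⟨K2_complete.extend fun _ => false⟩
  obtain ⟨K, hK⟩ := hJ.hasLeftInverse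
  have hF : ((K2_complete.exp U).extend K).PointSurjective :=
    (RGraphHom.pointSurjective_iff _).2 hK.surjective
  exact ⟨⟨_, hF⟩, not_pointSurjective_to_exp_K2 _ hF⟩

/-- If an rgraph `U` had the property that every rgraph is isomorphic to (the
rgraph represented by) one of its vertices, and there is an injection `J` from
the vertices of `K₂^U` into the vertices of `U`, then there would be a
morphism `F : U → K₂^U` that is onto for global elements — contradicting
Lawvere's fixed-point corollary.  Hence no such `unlimited` rgraph `U` exists. -/
theorem no_unlimited_rgraph (U : RGraph) (repr : U.V → RGraph)
    (hrepr : ∀ G : RGraph, ∃ v : U.V, Nonempty (RGraphIso (repr v) G))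
    (J : (RGraph.exp U K2).V → U.V) (hJ : Function.Injective J) :
    (∃ F : RGraphHom U (RGraph.exp U K2),
        ∀ g : RGraphHom OneR (RGraph.exp U K2),
          ∃ a : RGraphHom OneR U, a.comp F = g) ∧ False :=
  no_unlimited_rgraph_general U J hJ
end
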